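/- arXiv:2509.17035 — 7 statements merged into one kernel-verified Lean document; each statement's English description precedes it below -/
import Mathlib

section
/- Let G be a connected simple graph with n ≥ 2 vertices, and let S ⊆ V(G) with |S| = σ. Then the number of closed 3-walks of the self-loop graph G_S satisfies Tr(A(G_S)^3) = 3·(∑_{v ∈ S} d_G(v)) + 6·t(G) + σ, where t(G) is the number of triangles of G. -/
open Finset Matrix BigOperators

lemma trace_adjMatrix_cube_aux {V : Type*} [Fintype V] [DecidableEq V]
    (G : SimpleGraph V) [DecidableRel G.Adj] :
    (G.adjMatrix ℝ * G.adjMatrix ℝ * G.adjMatrix ℝ).trace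
      = 6 * ((G.cliqueFinset 3).card : ℝ) := by
  classical
  set T : Finset (V × V × V) :=
    Finset.univ.filter (fun p : V × V × V =>
      G.Adj p.1 p.2.1 ∧ G.Adj p.2.1 p.2.2 ∧ G.Adj p.2.2 p.1) with hT
  have htrace : (G.adjMatrix ℝ * G.adjMatrix ℝ * G.adjMatrix ℝ).trace = (T.card : ℝ) := by
    have : (G.adjMatrix ℝ * G.adjMatrix ℝ * G.adjMatrix ℝ).trace
        = ∑ p : V × V × V, (if G.Adj p.1 p.2.1 ∧ G.Adj p.2.1 p.2.2 ∧ G.Adj p.2.2 p.1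
            then (1 : ℝ) else 0) := by
      rw [Fintype.sum_prod_type]
      simp_rw [Fintype.sum_prod_type]
      simp only [Matrix.trace, Matrix.diag, Matrix.mul_apply, Finset.sum_mul,
        SimpleGraph.adjMatrix_apply]
      rw [Finset.sum_comm]
      refine Finset.sum_congr rfl fun u _ => Finset.sum_congr rfl fun v _ =>
        Finset.sum_congr rfl fun w _ => ?_
      split_ifs <;> simp_all
    rw [this, Finset.sum_boole, hT]
  rw [htrace]
  have hmap : ∀ p ∈ T, ({p.1, p.2.1, p.2.2} : Finset V) ∈ G.cliqueFinset 3 := by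
    rintro ⟨u, v, w⟩ hp
    simp only [hT, Finset.mem_filter] at hp
    obtain ⟨-, huv, hvw, hwu⟩ := hp
    rw [SimpleGraph.mem_cliqueFinset_iff, SimpleGraph.is3Clique_triple_iff]
    exact ⟨huv, hwu.symm, hvw⟩
  have hcard := Finset.card_eq_sum_card_fiberwise hmap
  have hfiber : ∀ t ∈ G.cliqueFinset 3,
      (T.filter (fun p : V × V × V => ({p.1, p.2.1, p.2.2} : Finset V) = t)).card = 6 := by
    intro t ht
    obtain ⟨a, b, c, hab, hac, hbc, rfl⟩ :=
      SimpleGraph.is3Clique_iff.1 (SimpleGraph.mem_cliqueFinset_iff.1 ht)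
    have hset : T.filter (fun p : V × V × V => ({p.1, p.2.1, p.2.2} : Finset V) = {a, b, c})
        = {(a,b,c), (b,c,a), (c,a,b), (a,c,b), (c,b,a), (b,a,c)} := by
      ext ⟨u, v, w⟩
      simp only [hT, Finset.mem_filter, Finset.mem_univ, true_and, Finset.mem_insert,
        Finset.mem_singleton, Prod.mk.injEq]
      constructor
      · rintro ⟨⟨huv, hvw, hwu⟩, hs⟩
        have hu : u ∈ ({a, b, c} : Finset V) := hs ▸ (by simp)
        have hv : v ∈ ({a, b, c} : Finset V) := hs ▸ (by simp)
        have hw : w ∈ ({a, b, c} : Finset V) := hs ▸ (by simp)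
        simp only [Finset.mem_insert, Finset.mem_singleton] at hu hv hw
        rcases hu with rfl | rfl | rfl <;> rcases hv with rfl | rfl | rfl <;>
          rcases hw with rfl | rfl | rfl <;> simp_all
      · have key : ∀ x y z : V, G.Adj x y → G.Adj y z → G.Adj z x →
            ({x, y, z} : Finset V) = {a, b, c} →
            (G.Adj x y ∧ G.Adj y z ∧ G.Adj z x) ∧ ({x, y, z} : Finset V) = {a, b, c} :=
          fun x y z h1 h2 h3 h4 => ⟨⟨h1, h2, h3⟩, h4⟩
        rintro (⟨rfl, rfl, rfl⟩ | ⟨rfl, rfl, rfl⟩ | ⟨rfl, rfl, rfl⟩ | ⟨rfl, rfl, rfl⟩ |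
          ⟨rfl, rfl, rfl⟩ | ⟨rfl, rfl, rfl⟩)
        · exact ⟨⟨hab, hbc, hac.symm⟩, rfl⟩
        · refine ⟨⟨hbc, hac.symm, hab⟩, ?_⟩
          ext x; simp only [Finset.mem_insert, Finset.mem_singleton]; tauto
        · refine ⟨⟨hac.symm, hab, hbc⟩, ?_⟩
          ext x; simp only [Finset.mem_insert, Finset.mem_singleton]; tauto
        · refine ⟨⟨hac, hbc.symm, hab.symm⟩, ?_⟩
          ext x; simp only [Finset.mem_insert, Finset.mem_singleton]; tauto
        · refine ⟨⟨hbc.symm, hab.symm, hac⟩, ?_⟩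
          ext x; simp only [Finset.mem_insert, Finset.mem_singleton]; tauto
        · refine ⟨⟨hab.symm, hac, hbc.symm⟩, ?_⟩
          ext x; simp only [Finset.mem_insert, Finset.mem_singleton]; tauto
    rw [hset]
    have h1 : a ≠ b := hab.ne
    have h2 : a ≠ c := hac.ne
    have h3 : b ≠ c := hbc.ne
    rw [Finset.card_insert_of_notMem (by simp [Prod.ext_iff, h1, h2, h3, h1.symm, h2.symm, h3.symm]),
      Finset.card_insert_of_notMem (by simp [Prod.ext_iff, h1, h2, h3, h1.symm, h2.symm, h3.symm]),
      Finset.card_insert_of_notMem (by simp [Prod.ext_iff, h1, h2, h3, h1.symm, h2.symm, h3.symm]),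
      Finset.card_insert_of_notMem (by simp [Prod.ext_iff, h1, h2, h3, h1.symm, h2.symm, h3.symm]),
      Finset.card_insert_of_notMem (by simp [Prod.ext_iff, h1, h2, h3, h1.symm, h2.symm, h3.symm]),
      Finset.card_singleton]
  rw [hcard, Finset.sum_congr rfl hfiber, Finset.sum_const, smul_eq_mul]
  push_cast
  ring

/-- **Closed 3-walks on a self-loop graph.** For a connected simple graph `G` on `n ≥ 2`
vertices and a set `S` of vertices with `|S| = σ`, the trace of the cube of the adjacency
matrix of the self-loop graph `G_S` equals `3 ∑_{v ∈ S} d_G(v) + 6 t(G) + σ`, where `t(G)`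
is the number of triangles of `G`. -/
theorem closed_three_walks_selfLoop {V : Type*} [Fintype V] [DecidableEq V]
    (G : SimpleGraph V) [DecidableRel G.Adj]
    (hconn : G.Connected) (hn : 2 ≤ Fintype.card V) (S : Finset V) :
    ((G.adjMatrix ℝ + Matrix.diagonal fun v => if v ∈ S then (1 : ℝ) else 0) ^ 3).trace
      = 3 * (∑ v ∈ S, (G.degree v : ℝ)) + 6 * ((G.cliqueFinset 3).card : ℝ) + (S.card : ℝ) := by
  classical
  set A : Matrix V V ℝ := G.adjMatrix ℝ with hA
  set D : Matrix V V ℝ := Matrix.diagonal fun v => if v ∈ S then (1 : ℝ) else 0 with hD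
  have hexp : (A + D) ^ 3
      = A * A * A + (A * A * D + A * D * A + D * A * A)
        + (A * D * D + D * A * D + D * D * A) + D * D * D := by
    rw [pow_succ, pow_succ, pow_one]
    noncomm_ring
  have hDD : D * D = D := by
    have hfun : (fun v => (if v ∈ S then (1 : ℝ) else 0) * (if v ∈ S then (1 : ℝ) else 0))
        = fun v => if v ∈ S then (1 : ℝ) else 0 := by
      funext v; split <;> simp
    rw [hD, Matrix.diagonal_mul_diagonal, hfun]
  have htrAAD : (A * A * D).trace = ∑ v ∈ S, (G.degree v : ℝ) := by
    rw [hD]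
    simp only [Matrix.trace, Matrix.diag, Matrix.mul_diagonal, mul_ite, mul_one, mul_zero]
    rw [Finset.sum_ite_mem, Finset.univ_inter]
    simp only [hA, SimpleGraph.adjMatrix_mul_self_apply_self]
  have htrAD : (A * D).trace = 0 := by
    rw [hA, hD]
    simp [Matrix.trace, Matrix.diag, Matrix.mul_diagonal, SimpleGraph.adjMatrix_apply]
  have htrD : D.trace = (S.card : ℝ) := by
    simp [hD, Matrix.trace_diagonal]
  have hcyc1 : (A * D * A).trace = (A * A * D).trace := by
    rw [Matrix.trace_mul_comm, ← Matrix.mul_assoc]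
  have hcyc2 : (D * A * A).trace = (A * A * D).trace := by
    rw [Matrix.trace_mul_comm (D * A) A, ← Matrix.mul_assoc]
    rw [Matrix.trace_mul_comm, ← Matrix.mul_assoc]
  have hcyc3 : (D * A * D).trace = (A * D).trace := by
    rw [Matrix.trace_mul_comm (D * A) D, ← Matrix.mul_assoc, hDD]
    rw [Matrix.trace_mul_comm]
  have hcyc4 : (D * D * A).trace = (A * D).trace := by
    rw [hDD, Matrix.trace_mul_comm]
  rw [hexp]
  simp only [Matrix.trace_add]
  rw [hcyc1, hcyc2, hcyc3, hcyc4, Matrix.mul_assoc A D D, hDD, hDD,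
    htrAAD, htrAD, htrD, trace_adjMatrix_cube_aux]
  ring
end

section
/- Let G be a triangle-free simple graph on n vertices and S ⊆ V(G). Then 0 ≤ Tr(A(G_S)^3) ≤ (3/2)n^2 + n. -/
open Finset Matrix BigOperators

private lemma mantel_sum_degree {V : Type*} [Fintype V] [DecidableEq V]
    (G : SimpleGraph V) [DecidableRel G.Adj] (hfree : G.CliqueFree 3) :
    (∑ v, (G.degree v : ℝ)) ≤ (Fintype.card V : ℝ) ^ 2 / 2 := by
  set n : ℝ := (Fintype.card V : ℝ) with hn
  have hnnn : (0:ℝ) ≤ n := by positivity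
  have hkey : ∀ u v, G.Adj u v → (G.degree u : ℝ) + (G.degree v : ℝ) ≤ n := by
    intro u v huv
    have hdisj : Disjoint (G.neighborFinset u) (G.neighborFinset v) := by
      rw [Finset.disjoint_left]
      intro w hwu hwv
      rw [SimpleGraph.mem_neighborFinset] at hwu hwv
      exact (hfree {u, v, w}) (SimpleGraph.is3Clique_triple_iff.2 ⟨huv, hwu, hwv⟩)
    have h1 : (G.neighborFinset u ∪ G.neighborFinset v).card ≤ Fintype.card V := by
      simpa using Finset.card_le_card
        (Finset.subset_univ (G.neighborFinset u ∪ G.neighborFinset v))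
    rw [Finset.card_union_of_disjoint hdisj] at h1
    have : G.degree u + G.degree v ≤ Fintype.card V := by
      simpa [SimpleGraph.card_neighborFinset_eq_degree] using h1
    rw [hn]; exact_mod_cast this
  set D : ℝ := ∑ v, (G.degree v : ℝ) with hD
  have hDnn : 0 ≤ D := Finset.sum_nonneg fun v _ => by positivity
  have hsymm : (∑ v, ∑ u ∈ G.neighborFinset v, (G.degree u : ℝ))
      = ∑ u, (G.degree u : ℝ) * (G.degree u : ℝ) := by
    simp only [SimpleGraph.neighborFinset_eq_filter, Finset.sum_filter]
    rw [Finset.sum_comm]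
    refine Finset.sum_congr rfl fun u _ => ?_
    have : ∀ v : V, (if G.Adj v u then (G.degree u : ℝ) else 0)
        = (if G.Adj u v then (G.degree u : ℝ) else 0) := by
      intro v; simp [SimpleGraph.adj_comm]
    rw [Finset.sum_congr rfl fun v _ => this v, ← Finset.sum_filter,
      ← SimpleGraph.neighborFinset_eq_filter, Finset.sum_const,
      SimpleGraph.card_neighborFinset_eq_degree, nsmul_eq_mul]
  -- 2 * ∑ deg² ≤ n * D
  have hstep : 2 * (∑ v, (G.degree v : ℝ) * (G.degree v : ℝ)) ≤ n * D := by
    have h1 : (∑ v, ∑ u ∈ G.neighborFinset v, ((G.degree v : ℝ) + (G.degree u : ℝ)))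
        ≤ ∑ v, ∑ u ∈ G.neighborFinset v, n := by
      refine Finset.sum_le_sum fun v _ => Finset.sum_le_sum fun u hu => ?_
      exact hkey v u (by rwa [SimpleGraph.mem_neighborFinset] at hu)
    have h2 : (∑ v, ∑ u ∈ G.neighborFinset v, ((G.degree v : ℝ) + (G.degree u : ℝ)))
        = (∑ v, (G.degree v : ℝ) * (G.degree v : ℝ))
          + ∑ v, ∑ u ∈ G.neighborFinset v, (G.degree u : ℝ) := by
      rw [← Finset.sum_add_distrib]
      refine Finset.sum_congr rfl fun v _ => ?_
      rw [Finset.sum_add_distrib, Finset.sum_const,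
        SimpleGraph.card_neighborFinset_eq_degree, nsmul_eq_mul, mul_comm]
    have h3 : (∑ v, ∑ u ∈ G.neighborFinset v, n) = n * D := by
      rw [hD, Finset.mul_sum]
      refine Finset.sum_congr rfl fun v _ => ?_
      rw [Finset.sum_const, SimpleGraph.card_neighborFinset_eq_degree, nsmul_eq_mul, mul_comm]
    rw [h2, hsymm, h3] at h1
    linarith
  -- Cauchy-Schwarz
  have hcs : D ^ 2 ≤ n * ∑ v, (G.degree v : ℝ) * (G.degree v : ℝ) := by
    have := sq_sum_le_card_mul_sum_sq (s := (Finset.univ : Finset V))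
      (f := fun v => (G.degree v : ℝ))
    simpa [hD, sq, Finset.card_univ, hn] using this
  have hfinal : 2 * D ^ 2 ≤ n ^ 2 * D := by nlinarith
  rcases eq_or_lt_of_le hDnn with h | h
  · rw [← h]; positivity
  · nlinarith

/-- **Closed 3-walks on triangle-free self-loop graphs.** If `G` is a triangle-free simple
graph on `n` vertices and `S ⊆ V(G)`, then `0 ≤ Tr(A(G_S)^3) ≤ (3/2) n² + n`. -/
theorem closed_three_walks_triangleFree_bound {V : Type*} [Fintype V] [DecidableEq V]
    (G : SimpleGraph V) [DecidableRel G.Adj] (hfree : G.CliqueFree 3) (S : Finset V) :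
    0 ≤ ((G.adjMatrix ℝ + Matrix.diagonal fun v => if v ∈ S then (1 : ℝ) else 0) ^ 3).trace ∧
    ((G.adjMatrix ℝ + Matrix.diagonal fun v => if v ∈ S then (1 : ℝ) else 0) ^ 3).trace
      ≤ 3 / 2 * (Fintype.card V : ℝ) ^ 2 + (Fintype.card V : ℝ) := by
  classical
  set A := G.adjMatrix ℝ with hA
  set d : V → ℝ := fun v => if v ∈ S then (1 : ℝ) else 0 with hd
  set Dm := Matrix.diagonal d with hDm
  have hd01 : ∀ v, d v = 0 ∨ d v = 1 := by
    intro v; by_cases h : v ∈ S <;> simp [hd, h]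
  have hdnn : ∀ v, 0 ≤ d v := fun v => by rcases hd01 v with h | h <;> simp [h]
  have hdle : ∀ v, d v ≤ 1 := fun v => by rcases hd01 v with h | h <;> simp [h]
  -- expansion
  have hexp : (A + Dm) ^ 3 = A*A*A + (A*A*Dm + A*Dm*A + Dm*(A*A))
      + (A*(Dm*Dm) + Dm*A*Dm + Dm*Dm*A) + Dm*(Dm*Dm) := by
    noncomm_ring
  -- traces of pieces
  have hAAA : (A*A*A).trace = 0 := by
    have hterm : ∀ i k j : V, A i k * A k j * A j i = 0 := by
      intro i k j
      by_cases h1 : G.Adj i k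
      · by_cases h2 : G.Adj k j
        · by_cases h3 : G.Adj j i
          · exact absurd (SimpleGraph.is3Clique_triple_iff.2 ⟨h1, h3.symm, h2⟩) (hfree _)
          · simp [hA, SimpleGraph.adjMatrix_apply, h3]
        · simp [hA, SimpleGraph.adjMatrix_apply, h2]
      · simp [hA, SimpleGraph.adjMatrix_apply, h1]
    have : (A*A*A).trace = ∑ i, ∑ j, ∑ k, A i k * A k j * A j i := by
      simp [Matrix.trace, Matrix.mul_apply, Finset.sum_mul]
    rw [this]
    exact Finset.sum_eq_zero fun i _ => Finset.sum_eq_zero fun j _ =>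
      Finset.sum_eq_zero fun k _ => hterm i k j
  have hAAD : (A*A*Dm).trace = ∑ i, (G.degree i : ℝ) * d i := by
    rw [hDm, Matrix.trace]
    refine Finset.sum_congr rfl fun i _ => ?_
    rw [Matrix.diag_apply, Matrix.mul_diagonal, SimpleGraph.adjMatrix_mul_self_apply_self]
  have hADD : (A*(Dm*Dm)).trace = 0 := by
    rw [hDm, Matrix.diagonal_mul_diagonal, Matrix.trace]
    refine Finset.sum_eq_zero fun i _ => ?_
    rw [Matrix.diag_apply, Matrix.mul_diagonal]
    simp [hA]
  have hDAD : (Dm*A*Dm).trace = 0 := by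
    rw [Matrix.trace_mul_comm, ← Matrix.mul_assoc, hDm, Matrix.diagonal_mul_diagonal,
      Matrix.trace_mul_comm, Matrix.trace]
    refine Finset.sum_eq_zero fun i _ => ?_
    rw [Matrix.diag_apply, Matrix.mul_diagonal]
    simp [hA]
  have hDDD : (Dm*(Dm*Dm)).trace = ∑ i, d i := by
    rw [hDm, Matrix.diagonal_mul_diagonal, Matrix.diagonal_mul_diagonal, Matrix.trace_diagonal]
    refine Finset.sum_congr rfl fun i _ => ?_
    rcases hd01 i with h | h <;> simp [h]
  have htr : ((A + Dm) ^ 3).trace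
      = 3 * (∑ i, (G.degree i : ℝ) * d i) + ∑ i, d i := by
    rw [hexp]
    simp only [Matrix.trace_add]
    have e1 : (A*Dm*A).trace = (A*A*Dm).trace := by
      rw [Matrix.trace_mul_comm, ← Matrix.mul_assoc]
    have e2 : (Dm*(A*A)).trace = (A*A*Dm).trace := by
      rw [Matrix.trace_mul_comm]
    have e3 : (Dm*Dm*A).trace = (A*(Dm*Dm)).trace := by
      rw [Matrix.trace_mul_comm]
    rw [e1, e2, e3, hAAA, hAAD, hADD, hDAD, hDDD]
    ring
  constructor
  · rw [htr]
    have h1 : 0 ≤ ∑ i, (G.degree i : ℝ) * d i :=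
      Finset.sum_nonneg fun i _ => mul_nonneg (by positivity) (hdnn i)
    have h2 : 0 ≤ ∑ i, d i := Finset.sum_nonneg fun i _ => hdnn i
    linarith
  · rw [htr]
    have h1 : (∑ i, (G.degree i : ℝ) * d i) ≤ ∑ i, (G.degree i : ℝ) :=
      Finset.sum_le_sum fun i _ => by
        calc (G.degree i : ℝ) * d i ≤ (G.degree i : ℝ) * 1 :=
          mul_le_mul_of_nonneg_left (hdle i) (by positivity)
        _ = _ := mul_one _
    have h2 : (∑ i, d i) ≤ (Fintype.card V : ℝ) := by
      calc (∑ i, d i) ≤ ∑ _i : V, (1:ℝ) := Finset.sum_le_sum fun i _ => hdle i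
      _ = (Fintype.card V : ℝ) := by simp
    have h3 := mantel_sum_degree G hfree
    linarith
end

section
/- Let K_{a,b} be the complete bipartite graph with parts A, B of sizes a, b ≥ 1, and let S ⊆ V(K_{a,b}) with σ_A = |S ∩ A| and σ_B = |S ∩ B|. Then Tr(A((K_{a,b})_S)^4) = σ_A(4b + 1) + σ_B(4a + 1) + 4σ_Aσ_B + 2a²b². -/
open Finset Matrix BigOperators

instance {V W : Type*} : DecidableRel (completeBipartiteGraph V W).Adj := fun v w =>
  inferInstanceAs (Decidable ((v.isLeft ∧ w.isRight) ∨ (v.isRight ∧ w.isLeft)))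

/-- **Closed 4-walks on complete bipartite self-loop graphs.** For the complete bipartite
graph `K_{a,b}` with parts of sizes `a, b ≥ 1` and `S ⊆ V(K_{a,b})` with `σ_A = |S ∩ A|`
and `σ_B = |S ∩ B|`, the trace of the fourth power of the adjacency matrix of `(K_{a,b})_S`
equals `σ_A(4b + 1) + σ_B(4a + 1) + 4 σ_A σ_B + 2 a² b²`. -/
theorem closed_four_walks_completeBipartite_selfLoop (a b : ℕ) (ha : 1 ≤ a) (hb : 1 ≤ b)
    (S : Finset (Fin a ⊕ Fin b)) :
    (((completeBipartiteGraph (Fin a) (Fin b)).adjMatrix ℝ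
        + Matrix.diagonal fun v => if v ∈ S then (1 : ℝ) else 0) ^ 4).trace
      = ((S.filter fun x => x.isLeft).card : ℝ) * (4 * (b : ℝ) + 1)
        + ((S.filter fun x => x.isRight).card : ℝ) * (4 * (a : ℝ) + 1)
        + 4 * ((S.filter fun x => x.isLeft).card : ℝ) * ((S.filter fun x => x.isRight).card : ℝ)
        + 2 * (a : ℝ) ^ 2 * (b : ℝ) ^ 2 := by
  set s : Fin a → ℝ := fun i => if Sum.inl i ∈ S then 1 else 0 with hs_def
  set t : Fin b → ℝ := fun j => if Sum.inr j ∈ S then 1 else 0 with ht_def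
  set M := ((completeBipartiteGraph (Fin a) (Fin b)).adjMatrix ℝ
      + Matrix.diagonal fun v => if v ∈ S then (1 : ℝ) else 0) with hM
  have hs2 : ∀ i, s i * s i = s i := by
    intro i; simp only [hs_def]; split_ifs <;> ring
  have ht2 : ∀ j, t j * t j = t j := by
    intro j; simp only [ht_def]; split_ifs <;> ring
  have hσA : ∑ i : Fin a, s i = ((S.filter fun x => x.isLeft).card : ℝ) := by
    simp only [hs_def]
    rw [Finset.sum_boole]
    congr 1
    apply Finset.card_bij (fun i _ => Sum.inl i)
    · intro i hi; simp only [Finset.mem_filter] at *; exact ⟨hi.2, rfl⟩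
    · intro i _ j _ h; exact Sum.inl_injective h
    · rintro (x | x) hx
      · exact ⟨x, by simp [Finset.mem_filter] at hx ⊢; exact hx, rfl⟩
      · simp [Finset.mem_filter] at hx
  have hσB : ∑ j : Fin b, t j = ((S.filter fun x => x.isRight).card : ℝ) := by
    simp only [ht_def]
    rw [Finset.sum_boole]
    congr 1
    apply Finset.card_bij (fun j _ => Sum.inr j)
    · intro j hj; simp only [Finset.mem_filter] at *; exact ⟨hj.2, rfl⟩
    · intro i _ j _ h; exact Sum.inr_injective h
    · rintro (x | x) hx
      · simp [Finset.mem_filter] at hx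
      · exact ⟨x, by simp [Finset.mem_filter] at hx ⊢; exact hx, rfl⟩
  -- the square of M
  set N : Matrix (Fin a ⊕ Fin b) (Fin a ⊕ Fin b) ℝ := Matrix.of fun u v =>
    match u, v with
    | .inl i, .inl j => (b : ℝ) + (if i = j then s i else 0)
    | .inl i, .inr j => s i + t j
    | .inr i, .inl j => t i + s j
    | .inr i, .inr j => (a : ℝ) + (if i = j then t i else 0) with hN
  have hMe : ∀ u v, M u v = match u, v with
    | .inl i, .inl j => if i = j then s i else 0
    | .inl _, .inr _ => 1
    | .inr _, .inl _ => 1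
    | .inr i, .inr j => if i = j then t i else 0 := by
    rintro (i | i) (j | j) <;>
      simp [hM, Matrix.add_apply, Matrix.diagonal_apply, SimpleGraph.adjMatrix_apply,
        Sum.inl.injEq, Sum.inr.injEq, hs_def, ht_def] <;>
      split_ifs <;> simp_all
  have hM2 : M * M = N := by
    ext u v
    rw [Matrix.mul_apply, Fintype.sum_sum_type]
    rcases u with i | i <;> rcases v with j | j <;>
      simp only [hMe, hN, Matrix.of_apply]
    · rcases eq_or_ne i j with h | h
      · subst h
        simp [Finset.sum_ite_eq, hs2, add_comm]
      · simp [Finset.sum_ite_eq, Finset.sum_ite_eq', h, Ne.symm h]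
    · simp [Finset.sum_ite_eq', Finset.sum_ite_eq]
    · simp [Finset.sum_ite_eq', Finset.sum_ite_eq]; ring
    · rcases eq_or_ne i j with h | h
      · subst h
        simp [Finset.sum_ite_eq, ht2, add_comm]
      · simp [Finset.sum_ite_eq, Finset.sum_ite_eq', h, Ne.symm h]
  have h4 : M ^ 4 = N * N := by
    rw [show (4 : ℕ) = 2 * 2 from rfl, pow_mul, pow_two, pow_two, hM2]
  rw [h4]
  have htr : (N * N).trace = ∑ u, ∑ v, N u v * N v u := by
    simp [Matrix.trace, Matrix.mul_apply, Matrix.diag]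
  rw [htr, Fintype.sum_sum_type]
  have hA : ∀ i : Fin a, ∑ v, N (Sum.inl i) v * N v (Sum.inl i)
      = ((a : ℝ) * (b * b) + 2 * b * s i + s i) + ((b : ℝ) * s i + 2 * s i * ∑ j, t j + ∑ j, t j) := by
    intro i
    rw [Fintype.sum_sum_type]
    congr 1
    · have h1 : ∀ j : Fin a, N (Sum.inl i) (Sum.inl j) * N (Sum.inl j) (Sum.inl i)
          = (b : ℝ) * b + (if i = j then 2 * (b : ℝ) * s i + s i else 0) := by
        intro j
        simp only [hN, Matrix.of_apply]
        rcases eq_or_ne i j with h | h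
        · subst h
          split_ifs with h'
          · linear_combination hs2 i
          · exact absurd rfl h'
        · simp [h, Ne.symm h]
      rw [Finset.sum_congr rfl fun j _ => h1 j, Finset.sum_add_distrib, Finset.sum_ite_eq,
        Finset.sum_const, Finset.card_univ, Fintype.card_fin, nsmul_eq_mul]
      simp only [Finset.mem_univ, if_true]
      ring
    · have h1 : ∀ j : Fin b, N (Sum.inl i) (Sum.inr j) * N (Sum.inr j) (Sum.inl i)
          = s i * s i + (2 * s i) * t j + t j * t j := by
        intro j; simp only [hN, Matrix.of_apply]; ring
      rw [Finset.sum_congr rfl fun j _ => h1 j, Finset.sum_add_distrib, Finset.sum_add_distrib,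
        Finset.sum_const, Finset.card_univ, Fintype.card_fin, nsmul_eq_mul, ← Finset.mul_sum,
        Finset.sum_congr rfl fun j _ => ht2 j, hs2 i]
  have hB : ∀ j : Fin b, ∑ v, N (Sum.inr j) v * N v (Sum.inr j)
      = ((a : ℝ) * t j + 2 * t j * ∑ i, s i + ∑ i, s i) + ((b : ℝ) * (a * a) + 2 * a * t j + t j) := by
    intro j
    rw [Fintype.sum_sum_type]
    congr 1
    · have h1 : ∀ i : Fin a, N (Sum.inr j) (Sum.inl i) * N (Sum.inl i) (Sum.inr j)
          = t j * t j + (2 * t j) * s i + s i * s i := by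
        intro i; simp only [hN, Matrix.of_apply]; ring
      rw [Finset.sum_congr rfl fun i _ => h1 i, Finset.sum_add_distrib, Finset.sum_add_distrib,
        Finset.sum_const, Finset.card_univ, Fintype.card_fin, nsmul_eq_mul, ← Finset.mul_sum,
        Finset.sum_congr rfl fun i _ => hs2 i, ht2 j]
    · have h1 : ∀ i : Fin b, N (Sum.inr j) (Sum.inr i) * N (Sum.inr i) (Sum.inr j)
          = (a : ℝ) * a + (if j = i then 2 * (a : ℝ) * t j + t j else 0) := by
        intro i
        simp only [hN, Matrix.of_apply]
        rcases eq_or_ne j i with h | h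
        · subst h
          split_ifs with h'
          · linear_combination ht2 j
          · exact absurd rfl h'
        · simp [h, Ne.symm h]
      rw [Finset.sum_congr rfl fun i _ => h1 i, Finset.sum_add_distrib, Finset.sum_ite_eq,
        Finset.sum_const, Finset.card_univ, Fintype.card_fin, nsmul_eq_mul]
      simp only [Finset.mem_univ, if_true]
      ring
  rw [Finset.sum_congr rfl fun i _ => hA i, Finset.sum_congr rfl fun j _ => hB j]
  have e1 : ∑ i : Fin a, (((a : ℝ) * (b * b) + 2 * b * s i + s i)
        + ((b : ℝ) * s i + 2 * s i * ∑ j, t j + ∑ j, t j))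
      = (a : ℝ) * ((a : ℝ) * (b * b) + ∑ j, t j)
        + (2 * b + 1 + b + 2 * ∑ j, t j) * ∑ i, s i := by
    rw [Finset.sum_congr rfl (fun i _ => show _ = ((a : ℝ) * (b * b) + ∑ j, t j)
        + (2 * (b : ℝ) + 1 + b + 2 * ∑ j, t j) * s i by ring)]
    rw [Finset.sum_add_distrib, Finset.sum_const, ← Finset.mul_sum]
    simp [Finset.card_univ, mul_add]
  have e2 : ∑ j : Fin b, (((a : ℝ) * t j + 2 * t j * ∑ i, s i + ∑ i, s i)
        + ((b : ℝ) * (a * a) + 2 * a * t j + t j))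
      = (b : ℝ) * ((b : ℝ) * (a * a) + ∑ i, s i)
        + (2 * a + 1 + a + 2 * ∑ i, s i) * ∑ j, t j := by
    rw [Finset.sum_congr rfl (fun j _ => show _ = ((b : ℝ) * (a * a) + ∑ i, s i)
        + (2 * (a : ℝ) + 1 + a + 2 * ∑ i, s i) * t j by ring)]
    rw [Finset.sum_add_distrib, Finset.sum_const, ← Finset.mul_sum]
    simp [Finset.card_univ, mul_add]
  rw [e1, e2, hσA, hσB]
  ring
end

section
/- Let G be a simple graph with n ≥ 1 vertices and S ⊆ V(G) with |S| = σ, and let λ_1, …, λ_n be the eigenvalues of A(G_S). Then ℳ_3(G_S) = ∑_{i=1}^n |λ_i − σ/n|³ equals 2·∑_{i : λ_i ≥ σ/n} λ_i³ − (6σ/n)·∑_{i : λ_i ≥ σ/n} λ_i² + (4σ²/n²)·∑_{i : λ_i ≥ σ/n} λ_i − Tr(A(G_S)^3) + (3σ/n)·Tr(A(G_S)^2) − 2σ³/n² + (σ²/n²)·E(G_S), where the filtered sums range over those indices i with λ_i ≥ σ/n. -/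
/-!
For odd `k`, `|y| ^ k = 2 * max y 0 ^ k - y ^ k`, so `∑ |λᵢ - c| ^ 3` and `∑ |λᵢ - c|` split into
sums over the eigenvalues `λᵢ ≥ c` and full sums of `(λᵢ - c) ^ k`. Expanding binomially, the full
sums become power sums `∑ λᵢ ^ j = tr (A ^ j)`; eliminating the count of eigenvalues `λᵢ ≥ c`
between the two splittings gives the identity for any real family and any `c`, with `σ` replaced
by `∑ λᵢ = tr A`, and `tr A(G_S) = σ` because only the loops contribute to the diagonal.
-/

open Finset Matrix

theorem Matrix.IsHermitian.trace_pow_eq_sum_eigenvalues_pow {𝕜 n : Type*} [RCLike 𝕜] [Fintype n]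
    [DecidableEq n] {A : Matrix n n 𝕜} (hA : A.IsHermitian) (k : ℕ) :
    (A ^ k).trace = ∑ i, (hA.eigenvalues i : 𝕜) ^ k := by
  conv_lhs => rw [hA.spectral_theorem]
  rw [← map_pow, Unitary.conjStarAlgAut_apply, trace_mul_cycle,
    Unitary.star_mul_self_of_mem (SetLike.coe_mem _), one_mul, diagonal_pow, trace_diagonal]
  rfl

theorem Odd.abs_pow_eq {k : ℕ} (hk : Odd k) (y : ℝ) :
    |y| ^ k = 2 * (if 0 ≤ y then y ^ k else 0) - y ^ k := by
  split_ifs with hy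
  · rw [abs_of_nonneg hy]; ring
  · rw [abs_of_neg (not_le.1 hy), hk.neg_pow]; ring

theorem Odd.sum_abs_sub_pow {ι : Type*} [Fintype ι] {k : ℕ} (hk : Odd k) (x : ι → ℝ) (c : ℝ) :
    ∑ i, |x i - c| ^ k = 2 * ∑ i ∈ univ.filter (fun i => c ≤ x i), (x i - c) ^ k
      - ∑ i, (x i - c) ^ k := by
  simp only [hk.abs_pow_eq, sub_nonneg, sum_sub_distrib, ← mul_sum, sum_filter]

theorem sum_sub_pow_three {ι : Type*} (T : Finset ι) (x : ι → ℝ) (c : ℝ) :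
    ∑ i ∈ T, (x i - c) ^ 3 = ∑ i ∈ T, x i ^ 3 - 3 * c * ∑ i ∈ T, x i ^ 2
      + 3 * c ^ 2 * ∑ i ∈ T, x i - #T * c ^ 3 := by
  simp only [mul_sum, ← sum_sub_distrib, ← sum_add_distrib, card_eq_sum_ones, Nat.cast_sum, sum_mul]
  exact sum_congr rfl fun i _ => by ring

theorem sum_abs_sub_pow_three {ι : Type*} [Fintype ι] (x : ι → ℝ) (c : ℝ) :
    ∑ i, |x i - c| ^ 3
      = 2 * ∑ i ∈ univ.filter (fun i => c ≤ x i), x i ^ 3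
        - 6 * c * ∑ i ∈ univ.filter (fun i => c ≤ x i), x i ^ 2
        + 4 * c ^ 2 * ∑ i ∈ univ.filter (fun i => c ≤ x i), x i
        - ∑ i, x i ^ 3 + 3 * c * ∑ i, x i ^ 2 - 2 * c ^ 2 * ∑ i, x i
        + c ^ 2 * ∑ i, |x i - c| := by
  have h1 := odd_one.sum_abs_sub_pow x c
  simp only [pow_one] at h1
  rw [(by decide : Odd 3).sum_abs_sub_pow, h1, sum_sub_pow_three, sum_sub_pow_three,
    sum_sub_distrib, sum_sub_distrib, sum_const, sum_const, card_univ]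
  simp only [nsmul_eq_mul]
  ring

theorem twisted_moment_three_general {V : Type*} [Fintype V] [DecidableEq V]
    (G : SimpleGraph V) [DecidableRel G.Adj] (S : Finset V)
    (hA : (G.adjMatrix ℝ + Matrix.diagonal fun v => if v ∈ S then (1 : ℝ) else 0).IsHermitian) :
    ∑ i, |hA.eigenvalues i - (S.card : ℝ) / (Fintype.card V : ℝ)| ^ 3
      = 2 * (∑ i ∈ Finset.univ.filter
              (fun i => (S.card : ℝ) / (Fintype.card V : ℝ) ≤ hA.eigenvalues i),
              hA.eigenvalues i ^ 3)
        - 6 * (S.card : ℝ) / (Fintype.card V : ℝ)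
          * (∑ i ∈ Finset.univ.filter
              (fun i => (S.card : ℝ) / (Fintype.card V : ℝ) ≤ hA.eigenvalues i),
              hA.eigenvalues i ^ 2)
        + 4 * (S.card : ℝ) ^ 2 / (Fintype.card V : ℝ) ^ 2
          * (∑ i ∈ Finset.univ.filter
              (fun i => (S.card : ℝ) / (Fintype.card V : ℝ) ≤ hA.eigenvalues i),
              hA.eigenvalues i)
        - ((G.adjMatrix ℝ + Matrix.diagonal fun v => if v ∈ S then (1 : ℝ) else 0) ^ 3).trace
        + 3 * (S.card : ℝ) / (Fintype.card V : ℝ)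
          * ((G.adjMatrix ℝ + Matrix.diagonal fun v => if v ∈ S then (1 : ℝ) else 0) ^ 2).trace
        - 2 * (S.card : ℝ) ^ 3 / (Fintype.card V : ℝ) ^ 2
        + (S.card : ℝ) ^ 2 / (Fintype.card V : ℝ) ^ 2
          * (∑ i, |hA.eigenvalues i - (S.card : ℝ) / (Fintype.card V : ℝ)|) := by
  have h_sum : ∑ i, hA.eigenvalues i = #S := by
    simpa [trace_add, sum_ite_mem] using hA.trace_eq_sum_eigenvalues.symm
  rw [sum_abs_sub_pow_three, hA.trace_pow_eq_sum_eigenvalues_pow,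
    hA.trace_pow_eq_sum_eigenvalues_pow, h_sum]
  simp only [RCLike.ofReal_real_eq_id, id]
  ring

/-- **The third twisted moment.** For a simple graph `G` on `n ≥ 1` vertices and `S ⊆ V(G)`
with `|S| = σ`, if `λ_1, …, λ_n` are the eigenvalues of the adjacency matrix `A(G_S)` of the
self-loop graph `G_S`, then
`ℳ₃(G_S) = ∑ᵢ |λ_i - σ/n|³
  = 2 ∑_{λ_i ≥ σ/n} λ_i³ - (6σ/n) ∑_{λ_i ≥ σ/n} λ_i² + (4σ²/n²) ∑_{λ_i ≥ σ/n} λ_i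
    - Tr(A(G_S)³) + (3σ/n)·Tr(A(G_S)²) - 2σ³/n² + (σ²/n²)·E(G_S)`,
where `E(G_S) = ∑ᵢ |λ_i - σ/n|` is the energy of `G_S`. -/
theorem twisted_moment_three {V : Type*} [Fintype V] [DecidableEq V]
    (G : SimpleGraph V) [DecidableRel G.Adj] (hn : 1 ≤ Fintype.card V) (S : Finset V)
    (hA : (G.adjMatrix ℝ + Matrix.diagonal fun v => if v ∈ S then (1 : ℝ) else 0).IsHermitian) :
    ∑ i, |hA.eigenvalues i - (S.card : ℝ) / (Fintype.card V : ℝ)| ^ 3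
      = 2 * (∑ i ∈ Finset.univ.filter
              (fun i => (S.card : ℝ) / (Fintype.card V : ℝ) ≤ hA.eigenvalues i),
              hA.eigenvalues i ^ 3)
        - 6 * (S.card : ℝ) / (Fintype.card V : ℝ)
          * (∑ i ∈ Finset.univ.filter
              (fun i => (S.card : ℝ) / (Fintype.card V : ℝ) ≤ hA.eigenvalues i),
              hA.eigenvalues i ^ 2)
        + 4 * (S.card : ℝ) ^ 2 / (Fintype.card V : ℝ) ^ 2
          * (∑ i ∈ Finset.univ.filter
              (fun i => (S.card : ℝ) / (Fintype.card V : ℝ) ≤ hA.eigenvalues i),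
              hA.eigenvalues i)
        - ((G.adjMatrix ℝ + Matrix.diagonal fun v => if v ∈ S then (1 : ℝ) else 0) ^ 3).trace
        + 3 * (S.card : ℝ) / (Fintype.card V : ℝ)
          * ((G.adjMatrix ℝ + Matrix.diagonal fun v => if v ∈ S then (1 : ℝ) else 0) ^ 2).trace
        - 2 * (S.card : ℝ) ^ 3 / (Fintype.card V : ℝ) ^ 2
        + (S.card : ℝ) ^ 2 / (Fintype.card V : ℝ) ^ 2
          * (∑ i, |hA.eigenvalues i - (S.card : ℝ) / (Fintype.card V : ℝ)|) :=
  twisted_moment_three_general G S hA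
end

section
/- Let G be a connected simple graph with n vertices, m edges and S ⊆ V(G) with |S| = σ. Then E(G_S) ≤ √(n·(2m + σ − σ²/n)) (the McClelland-type bound for self-loop graphs). -/
/-!
Since `tr A(G_S) = σ` and `tr A(G_S)² = 2m + σ`, the eigenvalues have mean `σ/n` and
`∑ (λᵢ - σ/n)² = 2m + σ - σ²/n`; Cauchy–Schwarz then bounds `∑ |λᵢ - σ/n|` by
`√(n ∑ (λᵢ - σ/n)²)`.
-/

open Finset Matrix

namespace Matrix.IsHermitian

variable {𝕜 n : Type*} [RCLike 𝕜] [Fintype n] [DecidableEq n] {A : Matrix n n 𝕜}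

theorem trace_pow_eq_sum_eigenvalues_pow_s14 (hA : A.IsHermitian) (k : ℕ) :
    (A ^ k).trace = ∑ i, (hA.eigenvalues i : 𝕜) ^ k := by
  conv_lhs => rw [hA.spectral_theorem, ← map_pow, Unitary.conjStarAlgAut_apply, trace_mul_cycle,
    Unitary.coe_star_mul_self, one_mul, diagonal_pow, trace_diagonal]
  rfl

end Matrix.IsHermitian

namespace SimpleGraph

variable {V α : Type*} [Fintype V] [DecidableEq V] (G : SimpleGraph V) [DecidableRel G.Adj]

theorem trace_adjMatrix_add_diagonal [AddCommMonoid α] [One α] (d : V → α) :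
    (G.adjMatrix α + diagonal d).trace = ∑ v, d v := by
  rw [trace_add, trace_adjMatrix, trace_diagonal, zero_add]

theorem trace_sq_adjMatrix_add_diagonal [CommRing α] (d : V → α) :
    ((G.adjMatrix α + diagonal d) ^ 2).trace = 2 * #G.edgeFinset + ∑ v, d v ^ 2 := by
  have h_sq : (G.adjMatrix α * G.adjMatrix α).trace = 2 * #G.edgeFinset := by
    simp_rw [trace, Matrix.diag, adjMatrix_mul_self_apply_self]
    rw [← Nat.cast_sum, G.sum_degrees_eq_twice_card_edges, Nat.cast_mul, Nat.cast_ofNat]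
  have h_cross : (G.adjMatrix α * diagonal d).trace = 0 := by
    simp [trace, mul_diagonal]
  rw [sq, add_mul, mul_add, mul_add, trace_add, trace_add, trace_add, trace_mul_comm (diagonal d),
    h_sq, h_cross, diagonal_mul_diagonal, trace_diagonal]
  simp only [sq, add_zero, zero_add]

end SimpleGraph

theorem Finset.sum_sub_average_sq {ι K : Type*} [Fintype ι] [Field K] (x : ι → K) :
    ∑ i, (x i - (∑ j, x j) / Fintype.card ι) ^ 2
      = ∑ i, x i ^ 2 - (∑ i, x i) ^ 2 / Fintype.card ι := by
  rcases eq_or_ne (Fintype.card ι : K) 0 with hn | hn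
  · simp [hn]
  simp only [sub_sq, sum_add_distrib, sum_sub_distrib, ← sum_mul, ← mul_sum, sum_const,
    card_univ, nsmul_eq_mul]
  field_simp
  ring

theorem Finset.sum_abs_le_sqrt_card_mul_sum_sq {ι : Type*} (s : Finset ι) (y : ι → ℝ) :
    ∑ i ∈ s, |y i| ≤ √(#s * ∑ i ∈ s, y i ^ 2) := by
  refine Real.le_sqrt_of_sq_le ?_
  simpa only [sq_abs] using sq_sum_le_card_mul_sum_sq (s := s) (f := fun i => |y i|)

theorem mcclelland_bound_selfLoop_general {V : Type*} [Fintype V] [DecidableEq V]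
    (G : SimpleGraph V) [DecidableRel G.Adj] (S : Finset V)
    (hA : (G.adjMatrix ℝ + Matrix.diagonal fun v => if v ∈ S then (1 : ℝ) else 0).IsHermitian) :
    ∑ i, |hA.eigenvalues i - (S.card : ℝ) / (Fintype.card V : ℝ)|
      ≤ Real.sqrt ((Fintype.card V : ℝ)
          * (2 * (G.edgeFinset.card : ℝ) + (S.card : ℝ)
            - (S.card : ℝ) ^ 2 / (Fintype.card V : ℝ))) := by
  have h_trace : ∑ i, hA.eigenvalues i = #S := by
    simpa [G.trace_adjMatrix_add_diagonal] using hA.trace_eq_sum_eigenvalues.symm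
  have h_trace_sq : ∑ i, hA.eigenvalues i ^ 2 = 2 * #G.edgeFinset + #S := by
    simpa [G.trace_sq_adjMatrix_add_diagonal] using (hA.trace_pow_eq_sum_eigenvalues_pow_s14 2).symm
  calc ∑ i, |hA.eigenvalues i - #S / Fintype.card V|
      = ∑ i, |hA.eigenvalues i - (∑ j, hA.eigenvalues j) / Fintype.card V| := by rw [h_trace]
    _ ≤ √(Fintype.card V *
          ∑ i, (hA.eigenvalues i - (∑ j, hA.eigenvalues j) / Fintype.card V) ^ 2) := by
      simpa only [card_univ] using sum_abs_le_sqrt_card_mul_sum_sq univ _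
    _ = _ := by rw [sum_sub_average_sq, h_trace, h_trace_sq]

/-- **McClelland-type bound for self-loop graphs.** For a connected simple graph `G` on `n`
vertices with `m` edges and `S ⊆ V(G)` with `|S| = σ`, the energy
`E(G_S) = ∑ᵢ |λ_i - σ/n|` of the self-loop graph `G_S` satisfies
`E(G_S) ≤ √(n (2m + σ - σ²/n))`. -/
theorem mcclelland_bound_selfLoop {V : Type*} [Fintype V] [DecidableEq V]
    (G : SimpleGraph V) [DecidableRel G.Adj] (hconn : G.Connected) (S : Finset V)
    (hA : (G.adjMatrix ℝ + Matrix.diagonal fun v => if v ∈ S then (1 : ℝ) else 0).IsHermitian) :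
    ∑ i, |hA.eigenvalues i - (S.card : ℝ) / (Fintype.card V : ℝ)|
      ≤ Real.sqrt ((Fintype.card V : ℝ)
          * (2 * (G.edgeFinset.card : ℝ) + (S.card : ℝ)
            - (S.card : ℝ) ^ 2 / (Fintype.card V : ℝ))) :=
  mcclelland_bound_selfLoop_general G S hA
end

section
/- Let G be a connected simple graph with n ≥ 2 vertices and m ≥ 1 edges, and S ⊆ V(G) with |S| = σ, 0 ≤ σ ≤ n. Then E(G_S) ≥ √(ℳ_2(G_S)³ / ℳ_4(G_S)); equivalently, E(G_S)² · ℳ_4(G_S) ≥ ℳ_2(G_S)³. -/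
open Finset Matrix BigOperators

lemma aux_energy_moment {ι : Type*} [Fintype ι] (x : ι → ℝ) (hx : ∀ i, 0 ≤ x i) :
    Real.sqrt ((∑ i, x i ^ 2) ^ 3 / (∑ i, x i ^ 4)) ≤ ∑ i, x i := by
  set A := ∑ i, x i with hAdef
  set B := ∑ i, x i ^ 2 with hBdef
  set C := ∑ i, x i ^ 3 with hCdef
  set D := ∑ i, x i ^ 4 with hDdef
  have hA0 : 0 ≤ A := Finset.sum_nonneg fun i _ => hx i
  have hB0 : 0 ≤ B := Finset.sum_nonneg fun i _ => pow_nonneg (hx i) 2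
  have hC0 : 0 ≤ C := Finset.sum_nonneg fun i _ => pow_nonneg (hx i) 3
  have hD0 : 0 ≤ D := Finset.sum_nonneg fun i _ => pow_nonneg (hx i) 4
  have h1 : B ^ 2 ≤ A * C := by
    have h := Finset.sum_mul_sq_le_sq_mul_sq Finset.univ
      (fun i => Real.sqrt (x i)) (fun i => x i * Real.sqrt (x i))
    calc B ^ 2 = (∑ i, Real.sqrt (x i) * (x i * Real.sqrt (x i))) ^ 2 := by
          congr 1; apply Finset.sum_congr rfl; intro i _
          have hs : Real.sqrt (x i) ^ 2 = x i := Real.sq_sqrt (hx i)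
          linear_combination (-(x i)) * hs
      _ ≤ (∑ i, Real.sqrt (x i) ^ 2) * ∑ i, (x i * Real.sqrt (x i)) ^ 2 := h
      _ = A * C := by
          congr 1
          · apply Finset.sum_congr rfl; intro i _; exact Real.sq_sqrt (hx i)
          · apply Finset.sum_congr rfl; intro i _
            have hs : Real.sqrt (x i) ^ 2 = x i := Real.sq_sqrt (hx i)
            linear_combination (x i ^ 2) * hs
  have h2 : C ^ 2 ≤ B * D := by
    have := Finset.sum_mul_sq_le_sq_mul_sq Finset.univ (fun i => x i) (fun i => x i ^ 2)
    calc C ^ 2 = (∑ i, x i * x i ^ 2) ^ 2 := by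
          congr 1; apply Finset.sum_congr rfl; intro i _; ring
      _ ≤ (∑ i, x i ^ 2) * ∑ i, (x i ^ 2) ^ 2 := this
      _ = B * D := by congr 1; apply Finset.sum_congr rfl; intro i _; ring
  have key : B ^ 3 ≤ A ^ 2 * D := by
    rcases eq_or_lt_of_le hB0 with hB | hB
    · nlinarith
    · nlinarith [sq_nonneg (B^2 - A*C), mul_le_mul h1 h1 (sq_nonneg B) (by positivity : (0:ℝ) ≤ A*C)]
  rcases eq_or_lt_of_le hD0 with hD | hD
  · rw [← hD, div_zero, Real.sqrt_zero]; exact hA0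
  · have : B ^ 3 / D ≤ A ^ 2 := (div_le_iff₀ hD).mpr (by linarith [key])
    calc Real.sqrt (B ^ 3 / D) ≤ Real.sqrt (A ^ 2) := Real.sqrt_le_sqrt this
      _ = A := Real.sqrt_sq hA0

/-- **Lower bound for the energy of a self-loop graph.** For a connected simple graph `G` on
`n ≥ 2` vertices with `m ≥ 1` edges and `S ⊆ V(G)` with `|S| = σ` (`0 ≤ σ ≤ n`), the energy
`E(G_S) = ∑ᵢ |λ_i - σ/n|` satisfies `E(G_S) ≥ √(ℳ₂(G_S)³ / ℳ₄(G_S))`, where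
`ℳ_q(G_S) = ∑ᵢ |λ_i - σ/n|^q`. -/
theorem energy_lower_bound_selfLoop {V : Type*} [Fintype V] [DecidableEq V]
    (G : SimpleGraph V) [DecidableRel G.Adj]
    (hconn : G.Connected) (hn : 2 ≤ Fintype.card V) (hm : 1 ≤ G.edgeFinset.card)
    (S : Finset V)
    (hA : (G.adjMatrix ℝ + Matrix.diagonal fun v => if v ∈ S then (1 : ℝ) else 0).IsHermitian) :
    Real.sqrt ((∑ i, |hA.eigenvalues i - (S.card : ℝ) / (Fintype.card V : ℝ)| ^ 2) ^ 3
        / (∑ i, |hA.eigenvalues i - (S.card : ℝ) / (Fintype.card V : ℝ)| ^ 4))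
      ≤ ∑ i, |hA.eigenvalues i - (S.card : ℝ) / (Fintype.card V : ℝ)| := by
  exact aux_energy_moment _ (fun i => abs_nonneg _)
end

section
/- Let G be a simple graph with n ≥ 2 vertices and m ≥ 1 edges, and S ⊆ V(G) with |S| = σ. Let r, s, t be nonnegative real numbers with 4r = s + t + 2. Then E(G_S) ≥ ℳ_r(G_S)² / √(ℳ_s(G_S) · ℳ_t(G_S)); equivalently, E(G_S) · √(ℳ_s(G_S) · ℳ_t(G_S)) ≥ ℳ_r(G_S)². -/
open Finset Matrix BigOperators

lemma rpow_sq_aux' {x : ℝ} (hx : 0 ≤ x) (p : ℝ) : (x ^ p) ^ 2 = x ^ (2 * p) := by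
  rw [← Real.rpow_natCast (x ^ p) 2, ← Real.rpow_mul hx]
  norm_num [mul_comm]

lemma energy_lower_bound_rst_aux {ι : Type*} [Fintype ι] (lam : ι → ℝ) (c : ℝ)
    (r s t : ℝ) (hs : 0 ≤ s) (ht : 0 ≤ t) (hrst : 4 * r = s + t + 2) :
    (∑ i, |lam i - c| ^ r) ^ 2
      ≤ (∑ i, |lam i - c|)
        * Real.sqrt ((∑ i, |lam i - c| ^ s) * (∑ i, |lam i - c| ^ t)) := by
  set a : ι → ℝ := fun i => |lam i - c| with ha
  have hpos : ∀ i, 0 ≤ a i := fun i => abs_nonneg _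
  have h1 : (∑ i, a i ^ r) ^ 2 ≤ (∑ i, a i) * (∑ i, a i ^ (2 * r - 1)) := by
    have key : ∀ i, a i ^ r = a i ^ (1/2 : ℝ) * a i ^ (r - 1/2) := by
      intro i
      rw [← Real.rpow_add_of_nonneg (hpos i) (by norm_num) (by linarith)]
      ring_nf
    calc (∑ i, a i ^ r) ^ 2 = (∑ i, a i ^ (1/2 : ℝ) * a i ^ (r - 1/2)) ^ 2 := by
          simp_rw [key]
      _ ≤ (∑ i, (a i ^ (1/2 : ℝ)) ^ 2) * (∑ i, (a i ^ (r - 1/2)) ^ 2) :=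
          Finset.sum_mul_sq_le_sq_mul_sq _ _ _
      _ = (∑ i, a i) * (∑ i, a i ^ (2 * r - 1)) := by
          congr 1
          · exact Finset.sum_congr rfl fun i _ => by
              rw [rpow_sq_aux' (hpos i)]; norm_num
          · exact Finset.sum_congr rfl fun i _ => by
              rw [rpow_sq_aux' (hpos i)]; ring_nf
  have h2 : (∑ i, a i ^ (2 * r - 1)) ≤ Real.sqrt ((∑ i, a i ^ s) * (∑ i, a i ^ t)) := by
    have key : ∀ i, a i ^ (2 * r - 1) = a i ^ (s/2 : ℝ) * a i ^ (t/2 : ℝ) := by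
      intro i
      rw [← Real.rpow_add_of_nonneg (hpos i) (by linarith) (by linarith)]
      congr 1; linarith
    have hcs : (∑ i, a i ^ (2 * r - 1)) ^ 2 ≤ (∑ i, a i ^ s) * (∑ i, a i ^ t) := by
      calc (∑ i, a i ^ (2 * r - 1)) ^ 2
          = (∑ i, a i ^ (s/2 : ℝ) * a i ^ (t/2 : ℝ)) ^ 2 := by simp_rw [key]
        _ ≤ (∑ i, (a i ^ (s/2 : ℝ)) ^ 2) * (∑ i, (a i ^ (t/2 : ℝ)) ^ 2) :=
            Finset.sum_mul_sq_le_sq_mul_sq _ _ _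
        _ = (∑ i, a i ^ s) * (∑ i, a i ^ t) := by
            congr 1 <;> exact Finset.sum_congr rfl fun i _ => by
              rw [rpow_sq_aux' (hpos i)]; ring_nf
    have hnn : 0 ≤ ∑ i, a i ^ (2 * r - 1) :=
      Finset.sum_nonneg fun i _ => Real.rpow_nonneg (hpos i) _
    calc (∑ i, a i ^ (2 * r - 1)) = Real.sqrt ((∑ i, a i ^ (2 * r - 1)) ^ 2) :=
          (Real.sqrt_sq hnn).symm
      _ ≤ _ := Real.sqrt_le_sqrt hcs
  calc (∑ i, a i ^ r) ^ 2 ≤ (∑ i, a i) * (∑ i, a i ^ (2 * r - 1)) := h1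
    _ ≤ (∑ i, a i) * Real.sqrt ((∑ i, a i ^ s) * (∑ i, a i ^ t)) :=
        mul_le_mul_of_nonneg_left h2 (Finset.sum_nonneg fun i _ => hpos i)

/-- **An energy lower bound via twisted moments.** For a simple graph `G` on `n ≥ 2`
vertices with `m ≥ 1` edges, `S ⊆ V(G)` with `|S| = σ`, and nonnegative real numbers
`r, s, t` with `4r = s + t + 2`, the energy `E(G_S) = ∑ᵢ |λ_i - σ/n|` satisfies
`E(G_S) · √(ℳ_s(G_S) · ℳ_t(G_S)) ≥ ℳ_r(G_S)²`, where `ℳ_q(G_S) = ∑ᵢ |λ_i - σ/n| ^ q`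
(real powers of the nonnegative bases). -/
theorem energy_lower_bound_rst {V : Type*} [Fintype V] [DecidableEq V]
    (G : SimpleGraph V) [DecidableRel G.Adj]
    (hn : 2 ≤ Fintype.card V) (hm : 1 ≤ G.edgeFinset.card)
    (S : Finset V)
    (hA : (G.adjMatrix ℝ + Matrix.diagonal fun v => if v ∈ S then (1 : ℝ) else 0).IsHermitian)
    (r s t : ℝ) (hr : 0 ≤ r) (hs : 0 ≤ s) (ht : 0 ≤ t) (hrst : 4 * r = s + t + 2) :
    (∑ i, |hA.eigenvalues i - (S.card : ℝ) / (Fintype.card V : ℝ)| ^ r) ^ 2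
      ≤ (∑ i, |hA.eigenvalues i - (S.card : ℝ) / (Fintype.card V : ℝ)|)
        * Real.sqrt ((∑ i, |hA.eigenvalues i - (S.card : ℝ) / (Fintype.card V : ℝ)| ^ s)
          * (∑ i, |hA.eigenvalues i - (S.card : ℝ) / (Fintype.card V : ℝ)| ^ t)) := by
  exact energy_lower_bound_rst_aux hA.eigenvalues _ r s t hs ht hrst
end
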